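/- arXiv:1011.2585 — 6 statements merged into one kernel-verified Lean document; each statement's English description precedes it below -/
import Mathlib

section
/- If G is a torsion-free group, n ∈ ℕ, m > (n−1)², and f : {0,1}^m → G is a cubic function, then |f({0,1}^m)| > n. -/
/-- A function `f : {0,1}^m → G` is cubic if there is a vector `(g₁,…,g_m)` of non-identity
elements such that `f(x₁,…,x_m) = g₁^{x₁} ⋯ g_m^{x_m}`. -/
def IsCubic {G : Type} [Group G] (m : ℕ) (f : (Fin m → Bool) → G) : Prop :=
  ∃ g : Fin m → G, (∀ i, g i ≠ 1) ∧
    ∀ x : Fin m → Bool, f x = (List.ofFn fun i => if x i then g i else 1).prod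

/-- A monoid is torsion-free if every non-identity element has infinite order
(the definition of `Monoid.IsTorsionFree` in the older Mathlib). -/
def Monoid.IsTorsionFree (G : Type*) [Monoid G] : Prop :=
  ∀ g : G, g ≠ 1 → ¬IsOfFinOrder g

/-!
Adding one generator `g` of infinite order to a cube enlarges its finite image `S`: the image
of the longer cube contains both `S` and `S * g`, and `S * g ⊆ S` would put the infinitely many
distinct elements `a * g ^ k` (`a ∈ S`) into `S`. By induction the image of an `m`-dimensional
cube has at least `m + 1` elements, and `m + 1 > n` as soon as `m > (n - 1) ^ 2`.
-/

open Set

theorem isOfFinOrder_of_mapsTo_mul_right {G : Type*} [Group G] {S : Set G} (hS : S.Finite)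
    (hne : S.Nonempty) {g : G} (hmaps : MapsTo (· * g) S S) : IsOfFinOrder g := by
  obtain ⟨a, ha⟩ := hne
  have horbit : range (fun k : ℕ => a * g ^ k) ⊆ S := by
    rintro _ ⟨k, rfl⟩
    induction k with
    | zero => simpa using ha
    | succ k ih => simpa [pow_succ, mul_assoc] using hmaps ih
  by_contra hg
  have hinj : Function.Injective fun k : ℕ => a * g ^ k :=
    (mul_right_injective a).comp (injective_pow_iff_not_isOfFinOrder.mpr hg)
  exact infinite_range_of_injective hinj (hS.subset horbit)

section CubeProd

variable {G : Type*} [Group G]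

def cubeProd {m : ℕ} (g : Fin m → G) (x : Fin m → Bool) : G :=
  (List.ofFn fun i => if x i then g i else 1).prod

theorem cubeProd_snoc {m : ℕ} (g : Fin (m + 1) → G) (x : Fin m → Bool) (b : Bool) :
    cubeProd g (Fin.snoc x b) =
      cubeProd (Fin.init g) x * (if b then g (Fin.last m) else 1) := by
  simp only [cubeProd, List.ofFn_succ', List.prod_concat, Fin.snoc_castSucc, Fin.snoc_last,
    Fin.init]

theorem ncard_range_cubeProd_init_lt {m : ℕ} (g : Fin (m + 1) → G)
    (hg : ¬IsOfFinOrder (g (Fin.last m))) :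
    (range (cubeProd (Fin.init g))).ncard < (range (cubeProd g)).ncard := by
  have hsub : range (cubeProd (Fin.init g)) ⊆ range (cubeProd g) := by
    rintro _ ⟨x, rfl⟩
    exact ⟨Fin.snoc x false, by simp [cubeProd_snoc]⟩
  obtain ⟨a, ha, hag⟩ : ∃ a ∈ range (cubeProd (Fin.init g)),
      a * g (Fin.last m) ∉ range (cubeProd (Fin.init g)) := by
    by_contra! hmaps
    exact hg (isOfFinOrder_of_mapsTo_mul_right (finite_range _) (range_nonempty _) hmaps)
  obtain ⟨x, rfl⟩ := ha
  refine ncard_lt_ncard ((ssubset_iff_of_subset hsub).mpr ⟨_, ?_, hag⟩) (finite_range _)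
  exact ⟨Fin.snoc x true, by simp [cubeProd_snoc]⟩

theorem succ_le_ncard_range_cubeProd {m : ℕ} (g : Fin m → G)
    (hg : ∀ i, ¬IsOfFinOrder (g i)) : m + 1 ≤ (range (cubeProd g)).ncard := by
  induction m with
  | zero => exact (ncard_pos (finite_range _)).mpr (range_nonempty _)
  | succ m ih =>
    have := ih (Fin.init g) fun i => hg i.castSucc
    have := ncard_range_cubeProd_init_lt g (hg (Fin.last m))
    omega

end CubeProd

theorem stmt_7_general {G : Type} [Group G] (htf : Monoid.IsTorsionFree G)
    (n m : ℕ) (hm : m > (n - 1) ^ 2)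
    (f : (Fin m → Bool) → G) (hf : IsCubic m f) :
    n < (Set.range f).ncard := by
  obtain ⟨g, hg1, hgf⟩ := hf
  have hf_eq : f = cubeProd g := funext hgf
  have hcard := succ_le_ncard_range_cubeProd g fun i => htf (g i) (hg1 i)
  have hsq : n - 1 ≤ (n - 1) ^ 2 := Nat.le_self_pow two_ne_zero (n - 1)
  rw [hf_eq]
  omega

theorem stmt_7 {G : Type} [Group G] (htf : Monoid.IsTorsionFree G)
    (n m : ℕ) (hn : 0 < n) (hm : m > (n - 1) ^ 2)
    (f : (Fin m → Bool) → G) (hf : IsCubic m f) :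
    n < (Set.range f).ncard :=
  stmt_7_general htf n m hm f hf
end

section
/- Let G be a torsion-free group and F ⊆ P(G) a left-invariant ideal. Then for every limit ordinal α the family τ^{<α}(F) = ⋃_{β<α} τ^β(F) is additive (closed under finite unions). In particular the thin-completion τ*(F) is an ideal on G. -/
open Pointwise

/-- A family of subsets of `G` is left-invariant if it is closed under left translations. -/
def LeftInvariant {G : Type} [Group G] (F : Set (Set G)) : Prop :=
  ∀ A ∈ F, ∀ x : G, x • A ∈ F

/-- A family of subsets is lower if it is closed under taking subsets. -/
def Lower {G : Type} [Group G] (F : Set (Set G)) : Prop :=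
  ∀ A B : Set G, A ⊆ B → B ∈ F → A ∈ F

/-- `tauOp F = τ(F)` is the family of `F`-thin sets. -/
def tauOp {G : Type} [Group G] (F : Set (Set G)) : Set (Set G) :=
  {A | ∀ x y : G, x ≠ y → x • A ∩ y • A ∈ F}

/-- A family is thin-complete if `τ(F) = F`. -/
def ThinComplete {G : Type} [Group G] (F : Set (Set G)) : Prop := tauOp F = F

/-- The thin-completion `τ*(F)`: the smallest thin-complete family containing `F`. -/
def tauStar {G : Type} [Group G] (F : Set (Set G)) : Set (Set G) :=
  ⋂₀ {T : Set (Set G) | F ⊆ T ∧ ThinComplete T}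

/-- The transfinite iterates `τ^α(F)`. -/
noncomputable def tauIter {G : Type} [Group G] (F : Set (Set G)) : Ordinal → Set (Set G) :=
  Ordinal.lt_wf.fix fun α ih =>
    if α = 0 then F
    else {A | ∀ x y : G, x ≠ y → ∃ β, ∃ h : β < α, x • A ∩ y • A ∈ ih β h}

/-- `τ^{<α}(F) = ⋃_{β<α} τ^β(F)`. -/
noncomputable def tauLT {G : Type} [Group G] (F : Set (Set G)) (α : Ordinal) : Set (Set G) :=
  {A | ∃ β < α, A ∈ tauIter F β}

/-!
Write `W_T(U) = ⋂_{t ∈ T} tU` for finite `T ⊆ G`. If `U = A₁ ∪ ⋯ ∪ Aₙ` with all `Aᵢ ∈ τ^m(F)`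
and `|T| > n`, then by pigeonhole every point of `W_T(U)` lies in an overlap `tAᵢ ∩ t'Aᵢ` with
`t ≠ t'`. There are boundedly many overlaps, each in `F` (if `m = 0`) or below level `m`, so by
induction on `m` their union lies in `τ^{m+k}(F)` with `k` depending on `n` only; this uniformity
matters because infinitely many pairs `x ≠ y` have to share one level. Since
`xW_T(U) ∩ yW_T(U) = W_{xT ∪ yT}(U)` and, `G` being torsion-free, `|xT ∪ yT| > |T|`, each
element fewer in `T` costs one more level, whence `U = W_{1}(U) ∈ τ^{m+k+n}(F)`. Below a limit ordinal
finitely many extra levels stay below the limit. Finally `τ*(F) = τ^{<α}(F)` for `α` the initial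
ordinal of a regular cardinal above `|G × G|`.
-/

theorem sUnion_mem_of_forall_mem {α : Type*} {F : Set (Set α)}
    (hadd : ∀ A B : Set α, A ∈ F → B ∈ F → A ∪ B ∈ F) {s : Finset (Set α)} (hs : s.Nonempty)
    (hF : ∀ A ∈ s, A ∈ F) : ⋃₀ (s : Set (Set α)) ∈ F := by
  induction hs using Finset.Nonempty.cons_induction with
  | singleton A => simpa using hF A
  | cons A s hA hs ih =>
    rw [Finset.coe_cons, Set.sUnion_insert]
    exact hadd _ _ (hF A (by simp)) (ih fun B hB => hF B (by simp [hB]))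

section

variable {G : Type} [Group G]

theorem eq_one_of_smul_finset_subset [DecidableEq G] (htf : ∀ g : G, g ≠ 1 → ¬IsOfFinOrder g)
    {g : G} {T : Finset G} (hT : T.Nonempty) (h : g • T ⊆ T) : g = 1 := by
  by_contra hg
  obtain ⟨t, ht⟩ := hT
  have hpow : ∀ k : ℕ, g ^ k * t ∈ T := by
    intro k
    induction k with
    | zero => simpa using ht
    | succ k ih => simpa [pow_succ', mul_assoc] using h (Finset.smul_mem_smul_finset ih)
  obtain ⟨i, j, hij, heq⟩ :=
    Finite.exists_ne_map_eq_of_infinite fun k : ℕ => (⟨g ^ k * t, hpow k⟩ : T)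
  refine htf g hg (not_not.mp fun hinf => hij ?_)
  exact injective_pow_iff_not_isOfFinOrder.mpr hinf (mul_right_cancel (congrArg Subtype.val heq))

theorem card_lt_card_smul_union_smul [DecidableEq G] (htf : ∀ g : G, g ≠ 1 → ¬IsOfFinOrder g)
    {x y : G} (hxy : x ≠ y) {T : Finset G} (hT : T.Nonempty) :
    T.card < (x • T ∪ y • T).card := by
  by_contra! hle
  have hunion : x • T ∪ y • T = x • T :=
    (Finset.eq_of_subset_of_card_le Finset.subset_union_left
      (by rwa [Finset.card_smul_finset])).symm
  have hsub : (x⁻¹ * y) • T ⊆ T := by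
    rw [mul_smul, ← Finset.subset_smul_finset_iff, ← hunion]
    exact Finset.subset_union_right
  exact hxy (inv_mul_eq_one.mp (eq_one_of_smul_finset_subset htf hT hsub))

variable {F : Set (Set G)}

theorem tauIter_zero (F : Set (Set G)) : tauIter F 0 = F := by
  rw [tauIter, WellFounded.fix_eq, if_pos rfl]

theorem tauIter_of_ne_zero {α : Ordinal} (hα : α ≠ 0) : tauIter F α = tauOp (tauLT F α) := by
  rw [tauIter, WellFounded.fix_eq, if_neg hα]
  simp only [tauOp, tauLT, exists_prop]
  rfl

theorem tauIter_mono (hli : LeftInvariant F) (hlo : Lower F) : Monotone (tauIter F) := by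
  intro α γ hαγ A hA
  rcases eq_or_ne γ 0 with rfl | hγ
  · rwa [nonpos_iff_eq_zero.mp hαγ] at hA
  rw [tauIter_of_ne_zero hγ]
  intro x y hxy
  rcases eq_or_ne α 0 with rfl | hα
  · rw [tauIter_zero] at hA
    refine ⟨0, pos_iff_ne_zero.mpr hγ, ?_⟩
    rw [tauIter_zero]
    exact hlo _ _ Set.inter_subset_left (hli A hA x)
  · rw [tauIter_of_ne_zero hα] at hA
    obtain ⟨β, hβ, hA⟩ := hA x y hxy
    exact ⟨β, hβ.trans_le hαγ, hA⟩

theorem smul_inter_smul_mem_tauIter (hli : LeftInvariant F) (hlo : Lower F) {β : Ordinal}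
    {A : Set G} (hA : A ∈ tauIter F β) {x y : G} (hxy : x ≠ y) :
    x • A ∩ y • A ∈ tauIter F β := by
  rcases eq_or_ne β 0 with rfl | hβ
  · rw [tauIter_zero] at hA ⊢
    exact hlo _ _ Set.inter_subset_left (hli A hA x)
  · rw [tauIter_of_ne_zero hβ] at hA
    obtain ⟨γ, hγ, hA⟩ := hA x y hxy
    exact tauIter_mono hli hlo hγ.le hA

theorem lower_tauIter (hlo : Lower F) (α : Ordinal) : Lower (tauIter F α) := by
  induction α using WellFoundedLT.induction with
  | _ α ih =>
  intro A B hAB hB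
  rcases eq_or_ne α 0 with rfl | hα
  · rw [tauIter_zero] at hB ⊢
    exact hlo A B hAB hB
  rw [tauIter_of_ne_zero hα] at hB ⊢
  intro x y hxy
  obtain ⟨β, hβ, hB⟩ := hB x y hxy
  exact ⟨β, hβ, ih β hβ _ _ (Set.inter_subset_inter (Set.smul_set_mono hAB)
    (Set.smul_set_mono hAB)) hB⟩

theorem lower_tauLT (hlo : Lower F) (α : Ordinal) : Lower (tauLT F α) :=
  fun A B hAB ⟨β, hβ, hB⟩ => ⟨β, hβ, lower_tauIter hlo β A B hAB hB⟩

theorem exists_lt_forall_mem_tauIter (hli : LeftInvariant F) (hlo : Lower F) {m : Ordinal}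
    (hm : m ≠ 0) {u : Finset (Set G)} (hu : ∀ P ∈ u, P ∈ tauLT F m) :
    ∃ m' < m, ∀ P ∈ u, P ∈ tauIter F m' := by
  choose! β hβ hP using hu
  refine ⟨u.sup β, (Finset.sup_lt_iff (pos_iff_ne_zero.mpr hm)).mpr hβ, fun P hPu => ?_⟩
  exact tauIter_mono hli hlo (Finset.le_sup hPu) (hP P hPu)

def interTranslates (U : Set G) (T : Finset G) : Set G :=
  ⋂ t ∈ T, t • U

theorem mem_interTranslates {U : Set G} {T : Finset G} {z : G} :
    z ∈ interTranslates U T ↔ ∀ t ∈ T, t⁻¹ * z ∈ U := by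
  simp [interTranslates, Set.mem_smul_set_iff_inv_smul_mem]

theorem interTranslates_singleton_one (U : Set G) : interTranslates U {1} = U := by
  ext z
  simp [mem_interTranslates]

theorem interTranslates_anti (U : Set G) {T T' : Finset G} (h : T ⊆ T') :
    interTranslates U T' ⊆ interTranslates U T :=
  fun _ hz => mem_interTranslates.mpr fun t ht => mem_interTranslates.mp hz t (h ht)

theorem smul_interTranslates_inter [DecidableEq G] (U : Set G) (T : Finset G) (x y : G) :
    x • interTranslates U T ∩ y • interTranslates U T = interTranslates U (x • T ∪ y • T) := by
  ext z
  simp [Set.mem_smul_set_iff_inv_smul_mem, mem_interTranslates, Finset.mem_smul_finset,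
    or_imp, forall_and, mul_assoc]

theorem mem_tauIter_add_of_interTranslates_mem (htf : ∀ g : G, g ≠ 1 → ¬IsOfFinOrder g)
    (hlo : Lower F) {U : Set G} {α : Ordinal} {n : ℕ}
    (h : ∀ T : Finset G, T.card = n + 1 → interTranslates U T ∈ tauIter F α) :
    U ∈ tauIter F (α + n) := by
  classical
  suffices ∀ j : ℕ, ∀ T : Finset G, 0 < T.card → T.card + j = n + 1 →
      interTranslates U T ∈ tauIter F (α + j) by
    simpa [interTranslates_singleton_one] using this n {1} (by simp) (by simp [add_comm])
  intro j
  induction j with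
  | zero => exact fun T _ hT => by simpa using h T hT
  | succ j ih =>
    intro T hT hTj
    rw [tauIter_of_ne_zero (by positivity)]
    intro x y hxy
    obtain ⟨T', hT'sub, hT'card⟩ := Finset.exists_subset_card_eq
      (card_lt_card_smul_union_smul htf hxy (Finset.card_pos.mp hT))
    refine ⟨α + j, by gcongr; simp, ?_⟩
    rw [smul_interTranslates_inter]
    exact lower_tauIter hlo _ _ _ (interTranslates_anti U hT'sub)
      (ih T' (by omega) (by omega))

open Classical in
noncomputable def overlaps (s : Finset (Set G)) (T : Finset G) : Finset (Set G) :=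
  (s ×ˢ T.offDiag).image fun p => p.2.1 • p.1 ∩ p.2.2 • p.1

theorem mem_overlaps {s : Finset (Set G)} {T : Finset G} {P : Set G} :
    P ∈ overlaps s T ↔ ∃ A ∈ s, ∃ x ∈ T, ∃ y ∈ T, x ≠ y ∧ x • A ∩ y • A = P := by
  simp [overlaps, and_assoc]

theorem card_overlaps_le (s : Finset (Set G)) (T : Finset G) :
    (overlaps s T).card ≤ s.card * (T.card * T.card) := by
  classical
  calc (overlaps s T).card ≤ (s ×ˢ T.offDiag).card := Finset.card_image_le
    _ ≤ s.card * (T.card * T.card) := by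
      rw [Finset.card_product, Finset.offDiag_card]
      exact Nat.mul_le_mul_left _ (Nat.sub_le _ _)

theorem overlaps_nonempty {s : Finset (Set G)} {T : Finset G} (hs : s.Nonempty)
    (hT : 1 < T.card) : (overlaps s T).Nonempty := by
  obtain ⟨A, hA⟩ := hs
  obtain ⟨x, hx, y, hy, hxy⟩ := Finset.one_lt_card.mp hT
  exact ⟨_, mem_overlaps.mpr ⟨A, hA, x, hx, y, hy, hxy, rfl⟩⟩

theorem mem_of_mem_overlaps {X : Set (Set G)} {s : Finset (Set G)} {T : Finset G} {P : Set G}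
    (hs : ∀ A ∈ s, A ∈ tauOp X) (hP : P ∈ overlaps s T) : P ∈ X := by
  obtain ⟨A, hA, x, -, y, -, hxy, rfl⟩ := mem_overlaps.mp hP
  exact hs A hA x y hxy

theorem interTranslates_sUnion_subset {s : Finset (Set G)} {T : Finset G}
    (h : s.card < T.card) :
    interTranslates (⋃₀ (s : Set (Set G))) T ⊆ ⋃₀ (overlaps s T : Set (Set G)) := by
  intro z hz
  have hcover : ∀ t ∈ T, ∃ A ∈ s, z ∈ t • A := fun t ht => by
    simpa [Set.mem_smul_set_iff_inv_smul_mem] using mem_interTranslates.mp hz t ht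
  choose! f hfs hzf using hcover
  obtain ⟨x, hx, y, hy, hxy, hfxy⟩ := Finset.exists_ne_map_eq_of_card_lt_of_maps_to h hfs
  refine ⟨x • f x ∩ y • f x, mem_overlaps.mpr ⟨f x, hfs x hx, x, hx, y, hy, hxy, rfl⟩, ?_⟩
  exact ⟨hzf x hx, hfxy ▸ hzf y hy⟩

def UnionLevelBound (F : Set (Set G)) (m : Ordinal) (n k : ℕ) : Prop :=
  ∀ s : Finset (Set G), s.Nonempty → s.card ≤ n → (∀ A ∈ s, A ∈ tauIter F m) →
    ⋃₀ (s : Set (Set G)) ∈ tauIter F (m + k)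

theorem exists_sUnion_mem_of_forall_mem_tauLT (hli : LeftInvariant F) (hlo : Lower F)
    {m : Ordinal} (hm : m ≠ 0) (ih : ∀ m' < m, ∀ n, ∃ k, UnionLevelBound F m' n k) (n : ℕ) :
    ∃ k : ℕ, ∀ u : Finset (Set G), u.Nonempty → u.card ≤ n → (∀ P ∈ u, P ∈ tauLT F m) →
      ⋃₀ (u : Set (Set G)) ∈ tauIter F (m + k) := by
  rcases Ordinal.zero_or_succ_or_isSuccLimit m with rfl | ⟨μ, rfl⟩ | hlim
  · exact (hm rfl).elim
  · -- every member of `τ^{<μ+1}(F)` lies in `τ^μ(F)`, so `k` can be fixed before `u` is given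
    obtain ⟨k, hk⟩ := ih μ (Order.lt_succ μ) n
    refine ⟨k, fun u hu hun hP => ?_⟩
    obtain ⟨m', hm', hPm'⟩ := exists_lt_forall_mem_tauIter hli hlo hm hP
    refine tauIter_mono hli hlo (by gcongr; exact Order.le_succ μ) (hk u hu hun fun P hPu => ?_)
    exact tauIter_mono hli hlo (Order.lt_succ_iff.mp hm') (hPm' P hPu)
  · refine ⟨0, fun u hu hun hP => ?_⟩
    obtain ⟨m', hm', hPm'⟩ := exists_lt_forall_mem_tauIter hli hlo hm hP
    obtain ⟨k, hk⟩ := ih m' hm' n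
    refine tauIter_mono hli hlo ?_ (hk u hu hun hPm')
    simpa using (hlim.add_natCast_lt hm' k).le

theorem exists_sUnion_overlaps_mem (hli : LeftInvariant F) (hlo : Lower F)
    (hadd : ∀ A B : Set G, A ∈ F → B ∈ F → A ∪ B ∈ F) {m : Ordinal}
    (ih : ∀ m' < m, ∀ n, ∃ k, UnionLevelBound F m' n k) (n : ℕ) :
    ∃ k : ℕ, ∀ s : Finset (Set G), s.Nonempty → s.card ≤ n → (∀ A ∈ s, A ∈ tauIter F m) →
      ∀ T : Finset G, T.card = n + 1 → ⋃₀ (overlaps s T : Set (Set G)) ∈ tauIter F (m + k) := by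
  rcases eq_or_ne m 0 with rfl | hm
  · refine ⟨0, fun s hs hsn hA T hT => ?_⟩
    rw [tauIter_zero] at hA
    rw [Nat.cast_zero, add_zero, tauIter_zero]
    refine sUnion_mem_of_forall_mem hadd (overlaps_nonempty hs ?_) fun _ => mem_of_mem_overlaps ?_
    · have := Finset.card_pos.mpr hs
      omega
    · exact fun A hA' x y hxy => hlo _ _ Set.inter_subset_left (hli A (hA A hA') x)
  · obtain ⟨k, hk⟩ :=
      exists_sUnion_mem_of_forall_mem_tauLT hli hlo hm ih (n * ((n + 1) * (n + 1)))
    refine ⟨k, fun s hs hsn hA T hT => hk _ (overlaps_nonempty hs ?_) ?_ ?_⟩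
    · have := Finset.card_pos.mpr hs
      omega
    · refine (card_overlaps_le s T).trans ?_
      rw [hT]
      exact Nat.mul_le_mul_right _ hsn
    · rw [tauIter_of_ne_zero hm] at hA
      exact fun _ => mem_of_mem_overlaps hA

theorem exists_unionLevelBound (htf : ∀ g : G, g ≠ 1 → ¬IsOfFinOrder g)
    (hli : LeftInvariant F) (hlo : Lower F) (hadd : ∀ A B : Set G, A ∈ F → B ∈ F → A ∪ B ∈ F)
    (m : Ordinal) (n : ℕ) : ∃ k, UnionLevelBound F m n k := by
  induction m using WellFoundedLT.induction generalizing n with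
  | _ m ih =>
  obtain ⟨k, hk⟩ := exists_sUnion_overlaps_mem hli hlo hadd ih n
  refine ⟨k + n, fun s hs hsn hA => ?_⟩
  have := mem_tauIter_add_of_interTranslates_mem htf hlo fun T hT =>
    lower_tauIter hlo _ _ _ (interTranslates_sUnion_subset (by omega)) (hk s hs hsn hA T hT)
  simpa [add_assoc] using this

theorem union_mem_tauLT (htf : ∀ g : G, g ≠ 1 → ¬IsOfFinOrder g)
    (hli : LeftInvariant F) (hlo : Lower F) (hadd : ∀ A B : Set G, A ∈ F → B ∈ F → A ∪ B ∈ F)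
    {α : Ordinal} (hα : Order.IsSuccLimit α) {A B : Set G} (hA : A ∈ tauLT F α)
    (hB : B ∈ tauLT F α) : A ∪ B ∈ tauLT F α := by
  classical
  obtain ⟨β₁, hβ₁, hA⟩ := hA
  obtain ⟨β₂, hβ₂, hB⟩ := hB
  obtain ⟨k, hk⟩ := exists_unionLevelBound htf hli hlo hadd (max β₁ β₂) 2
  refine ⟨max β₁ β₂ + k, hα.add_natCast_lt (max_lt hβ₁ hβ₂) k, ?_⟩
  have hAB : ∀ C ∈ ({A, B} : Finset (Set G)), C ∈ tauIter F (max β₁ β₂) := by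
    simp only [Finset.mem_insert, Finset.mem_singleton, forall_eq_or_imp, forall_eq]
    exact ⟨tauIter_mono hli hlo (le_max_left β₁ β₂) hA,
      tauIter_mono hli hlo (le_max_right β₁ β₂) hB⟩
  simpa using hk {A, B} (by simp) Finset.card_le_two hAB

theorem tauIter_subset_of_thinComplete {X : Set (Set G)} (hFX : F ⊆ X) (hX : ThinComplete X)
    (β : Ordinal) : tauIter F β ⊆ X := by
  induction β using WellFoundedLT.induction with
  | _ β ih =>
  rcases eq_or_ne β 0 with rfl | hβ
  · rwa [tauIter_zero]
  rw [tauIter_of_ne_zero hβ, ← hX]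
  intro A hA x y hxy
  obtain ⟨γ, hγ, hA⟩ := hA x y hxy
  exact ih γ hγ hA

theorem tauStar_subset_of_thinComplete {X : Set (Set G)} (hFX : F ⊆ X) (hX : ThinComplete X) :
    tauStar F ⊆ X :=
  Set.sInter_subset_of_mem ⟨hFX, hX⟩

theorem tauLT_subset_tauStar (α : Ordinal) : tauLT F α ⊆ tauStar F :=
  fun _ ⟨β, _, hA⟩ => Set.mem_sInter.mpr fun _ ⟨hFX, hX⟩ =>
    tauIter_subset_of_thinComplete hFX hX β hA

theorem thinComplete_tauLT (hli : LeftInvariant F) (hlo : Lower F) {α : Ordinal.{0}}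
    (hα : Cardinal.mk (G × G) < α.cof) : ThinComplete (tauLT F α) := by
  ext A
  constructor
  · intro hA
    have hα0 : α ≠ 0 := by
      rintro rfl
      simp at hα
    have hlevel : ∀ p : G × G, ∃ β < α, p.1 ≠ p.2 → p.1 • A ∩ p.2 • A ∈ tauIter F β := by
      intro ⟨x, y⟩
      by_cases hxy : x = y
      · exact ⟨0, pos_iff_ne_zero.mpr hα0, fun h => absurd hxy h⟩
      · obtain ⟨β, hβ, h⟩ := hA x y hxy
        exact ⟨β, hβ, fun _ => h⟩
    choose f hfα hf using hlevel
    have hle : ∀ p, f p + 1 ≤ ⨆ p, f p + 1 := Ordinal.le_iSup fun p => f p + 1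
    refine ⟨⨆ p, f p + 1, Ordinal.iSup_add_one_lt_of_lt_cof hα hfα, ?_⟩
    rw [tauIter_of_ne_zero ((hle (1, 1)).trans_lt' (by simp)).ne']
    exact fun x y hxy => ⟨f (x, y), (Order.lt_add_one_iff.mpr le_rfl).trans_le (hle (x, y)),
      hf (x, y) hxy⟩
  · rintro ⟨β, hβ, hA⟩ x y hxy
    exact ⟨β, hβ, smul_inter_smul_mem_tauIter hli hlo hA hxy⟩

theorem exists_isSuccLimit_tauStar_eq_tauLT (hli : LeftInvariant F) (hlo : Lower F) :
    ∃ α : Ordinal.{0}, Order.IsSuccLimit α ∧ tauStar F = tauLT F α := by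
  set κ := max (Cardinal.mk (G × G)) Cardinal.aleph0
  have hκ : Cardinal.aleph0 ≤ Order.succ κ := (le_max_right _ _).trans (Order.le_succ κ)
  have hlim : Order.IsSuccLimit (Order.succ κ).ord := Cardinal.isSuccLimit_ord hκ
  refine ⟨(Order.succ κ).ord, hlim, (tauStar_subset_of_thinComplete ?_ ?_).antisymm
    (tauLT_subset_tauStar _)⟩
  · exact fun A hA => ⟨0, hlim.pos, by rwa [tauIter_zero]⟩
  · refine thinComplete_tauLT hli hlo ?_
    rw [(Cardinal.isRegular_succ (le_max_right _ _)).cof_ord]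
    exact (le_max_left _ _).trans_lt (Order.lt_succ κ)

end

theorem stmt_9 {G : Type} [Group G] (htf : ∀ g : G, g ≠ 1 → ¬IsOfFinOrder g)
    (F : Set (Set G)) (hli : LeftInvariant F) (hlo : Lower F)
    (hadd : ∀ A B : Set G, A ∈ F → B ∈ F → A ∪ B ∈ F) :
    (∀ α : Ordinal, Order.IsSuccLimit α →
      ∀ A B : Set G, A ∈ tauLT F α → B ∈ tauLT F α → A ∪ B ∈ tauLT F α) ∧
    (∀ A B : Set G, A ∈ tauStar F → B ∈ tauStar F → A ∪ B ∈ tauStar F) ∧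
    Lower (tauStar F) := by
  obtain ⟨α, hα, hstar⟩ := exists_isSuccLimit_tauStar_eq_tauLT hli hlo
  rw [hstar]
  exact ⟨fun _ hα' _ _ => union_mem_tauLT htf hli hlo hadd hα',
    fun _ _ => union_mem_tauLT htf hli hlo hadd hα, lower_tauLT hlo α⟩
end

section
/- Let H be a subgroup of finite index in a group G. A subset A ⊆ H is small in H if and only if A is small in G. -/
open Pointwise

/-- A subset `A` of a group `G` is large if `G = FA` for some finite `F ⊆ G`. -/
def IsLarge {G : Type} [Group G] (A : Set G) : Prop :=
  ∃ F : Finset G, (↑F : Set G) * A = Set.univ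

/-- A subset `A` of a group `G` is small if `L \ A` is large for every large `L ⊆ G`. -/
def IsSmall {G : Type} [Group G] (A : Set G) : Prop :=
  ∀ L : Set G, IsLarge L → IsLarge (L \ A)

section Aux

variable {G : Type} [Group G]

lemma isLarge_mono {L M : Set G} (h : L ⊆ M) (hL : IsLarge L) : IsLarge M := by
  obtain ⟨F, hF⟩ := hL
  refine ⟨F, Set.eq_univ_of_univ_subset ?_⟩
  rw [← hF]
  exact Set.mul_subset_mul_left h

lemma isLarge_smul {L : Set G} (g : G) (hL : IsLarge L) : IsLarge (g • L) := by
  classical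
  obtain ⟨F, hF⟩ := hL
  refine ⟨F.image (· * g⁻¹), Set.eq_univ_of_forall fun x => ?_⟩
  have hx : x ∈ (↑F : Set G) * L := by rw [hF]; trivial
  obtain ⟨f, hf, l, hl, rfl⟩ := hx
  refine ⟨f * g⁻¹, Finset.mem_coe.mpr (Finset.mem_image_of_mem _ hf), g * l, Set.smul_mem_smul_set hl, by group⟩

lemma isLarge_diff_mul {A : Set G} (hA : IsSmall A) (F : Finset G) :
    ∀ L : Set G, IsLarge L → IsLarge (L \ ((F : Set G) * A)) := by
  classical
  induction F using Finset.induction_on with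
  | empty => intro L hL; simpa using hL
  | @insert f F hf ih =>
    intro L hL
    have h1 : IsLarge (L \ ((F : Set G) * A)) := ih L hL
    have h2 : IsLarge ((f⁻¹ • (L \ ((F : Set G) * A))) \ A) := hA _ (isLarge_smul f⁻¹ h1)
    have h3 : IsLarge (f • ((f⁻¹ • (L \ ((F : Set G) * A))) \ A)) := isLarge_smul f h2
    have heq : f • ((f⁻¹ • (L \ ((F : Set G) * A))) \ A)
        = (L \ ((F : Set G) * A)) \ (f • A) := by
      rw [Set.smul_set_sdiff, smul_inv_smul]
    rw [heq] at h3
    have hset : (L \ ((F : Set G) * A)) \ (f • A)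
        = L \ ((↑(insert f F) : Set G) * A) := by
      have : (↑(insert f F) : Set G) * A = (f • A) ∪ (F : Set G) * A := by
        rw [Finset.coe_insert, Set.insert_eq, Set.union_mul, Set.singleton_mul]
        rfl
      rw [this, Set.diff_diff, Set.union_comm]
    rwa [hset] at h3

lemma isSmall_iff {A : Set G} :
    IsSmall A ↔ ∀ F : Finset G, IsLarge (((F : Set G) * A)ᶜ) := by
  classical
  constructor
  · intro h F
    have huniv : IsLarge (Set.univ : Set G) := ⟨{1}, by simp⟩
    have := isLarge_diff_mul h F Set.univ huniv
    rwa [← Set.compl_eq_univ_diff] at this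
  · rintro h L ⟨E, hE⟩
    obtain ⟨D, hD⟩ := h E
    have hsub : ((E : Set G) * A)ᶜ ⊆ (E : Set G) * (L \ A) := by
      intro b hb
      have hbE : b ∈ (E : Set G) * L := by rw [hE]; trivial
      obtain ⟨e, he, l, hl, rfl⟩ := hbE
      exact ⟨e, he, l, ⟨hl, fun hlA => hb ⟨e, he, l, hlA, rfl⟩⟩, rfl⟩
    refine ⟨D * E, Set.eq_univ_of_univ_subset ?_⟩
    calc Set.univ = (D : Set G) * (((E : Set G) * A)ᶜ) := hD.symm
      _ ⊆ (D : Set G) * ((E : Set G) * (L \ A)) := Set.mul_subset_mul_left hsub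
      _ = (↑(D * E) : Set G) * (L \ A) := by rw [Finset.coe_mul, mul_assoc]

lemma isLarge_subgroup (H : Subgroup G) [H.FiniteIndex] : IsLarge (H : Set G) := by
  classical
  have : Fintype (G ⧸ H) := Fintype.ofFinite (G ⧸ H)
  refine ⟨(Finset.univ : Finset (G ⧸ H)).image Quotient.out, Set.eq_univ_of_forall fun g => ?_⟩
  refine Set.mem_mul.mpr ⟨Quotient.out (QuotientGroup.mk g),
    Finset.mem_coe.mpr (Finset.mem_image_of_mem _ (Finset.mem_univ _)),
    (Quotient.out (QuotientGroup.mk g))⁻¹ * g, ?_, mul_inv_cancel_left _ g⟩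
  have h : (QuotientGroup.mk (Quotient.out (QuotientGroup.mk g)) : G ⧸ H) = QuotientGroup.mk g :=
    Quotient.out_eq _
  exact QuotientGroup.eq.mp h

lemma isLarge_image {H : Subgroup G} [H.FiniteIndex] {L : Set H} (hL : IsLarge L) :
    IsLarge (((↑) : H → G) '' L) := by
  classical
  obtain ⟨F, hF⟩ := hL
  obtain ⟨T, hT⟩ := isLarge_subgroup H
  have himg : (↑(F.image ((↑) : H → G)) : Set G) * (((↑) : H → G) '' L) = (H : Set G) := by
    rw [Finset.coe_image]
    have h1 : (Subtype.val '' (F : Set H)) * (Subtype.val '' L)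
        = Subtype.val '' ((F : Set H) * L) := by
      rw [← Subgroup.coe_subtype, ← Set.image_mul H.subtype]
    rw [h1, hF, Set.image_univ, Subtype.range_coe]
  refine ⟨T * F.image ((↑) : H → G), ?_⟩
  rw [Finset.coe_mul, mul_assoc, himg, hT]

lemma isLarge_of_image {H : Subgroup G} {L : Set H} (hL : IsLarge (((↑) : H → G) '' L)) :
    IsLarge L := by
  classical
  obtain ⟨F, hF⟩ := hL
  refine ⟨F.preimage ((↑) : H → G) (Set.injOn_of_injective Subtype.coe_injective),
    Set.eq_univ_of_forall fun h => ?_⟩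
  have hx : (h : G) ∈ (F : Set G) * (((↑) : H → G) '' L) := by rw [hF]; trivial
  obtain ⟨f, hf, _, ⟨l, hl, rfl⟩, heq⟩ := hx
  have hfH : f ∈ H := by
    have hfe : f = (h : G) * (↑l)⁻¹ := by rw [← heq]; group
    rw [hfe]
    exact mul_mem h.2 (inv_mem l.2)
  exact ⟨⟨f, hfH⟩, by simpa using hf, l, hl, Subtype.ext heq⟩

end Aux

theorem stmt_14 {G : Type} [Group G] (H : Subgroup G) [H.FiniteIndex]
    (A : Set G) (hA : A ⊆ (H : Set G)) :
    IsSmall {x : H | (x : G) ∈ A} ↔ IsSmall A := by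
  classical
  constructor
  · intro hA'
    rw [isSmall_iff] at hA' ⊢
    intro F
    set F' : Finset H := (F.filter (· ∈ H)).preimage ((↑) : H → G)
      (Set.injOn_of_injective Subtype.coe_injective) with hF'
    have hlargeG : IsLarge (((↑) : H → G) '' (((F' : Set H) * {x : H | (x : G) ∈ A})ᶜ)) :=
      isLarge_image (hA' F')
    refine isLarge_mono ?_ hlargeG
    rintro _ ⟨x, hx, rfl⟩ ⟨f, hf, a, ha, heq⟩
    have hfH : f ∈ H := by
      have hfe : f = (x : G) * a⁻¹ := by rw [← heq]; group
      rw [hfe]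
      exact mul_mem x.2 (inv_mem (hA ha))
    refine hx ⟨⟨f, hfH⟩, ?_, ⟨a, hA ha⟩, ha, Subtype.ext heq⟩
    simp only [hF', Finset.mem_coe, Finset.mem_preimage, Finset.mem_filter]
    exact ⟨hf, hfH⟩
  · intro hAsm
    rw [isSmall_iff]
    intro F'
    have h1 : IsLarge ((H : Set G) \ ((↑(F'.image ((↑) : H → G)) : Set G) * A)) :=
      isLarge_diff_mul hAsm _ _ (isLarge_subgroup H)
    refine isLarge_of_image (isLarge_mono ?_ h1)
    rintro g ⟨hgH, hg2⟩
    refine ⟨⟨g, hgH⟩, fun hmem => ?_, rfl⟩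
    obtain ⟨f', hf', a', ha', heq⟩ := hmem
    refine hg2 ⟨(f' : G), ?_, (a' : G), ha', ?_⟩
    · rw [Finset.coe_image]
      exact Set.mem_image_of_mem _ hf'
    · exact congrArg Subtype.val heq
end

section
/- Let G be an infinitely generated free abelian group. Then the ideal S_G of small subsets of G is not auto-invariant: there exists an injective endomorphism h : G → G and a subset A ⊆ G with h(A) small in G but A not small in G. -/
/-!
An infinitely generated free abelian group satisfies `G ≅ G × G`. Let `h` be the embedding
`G ≅ G × 0 ⊆ G × G ≅ G`. Its range `H` is a subgroup of infinite index (it is killed by a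
surjection onto `G`), and a subgroup of infinite index is small. But `H = h(G)`, and `G` itself is
never small.
-/

open Pointwise

/-- A subset `A` of an additive group `G` is large if `G = F + A` for some finite `F ⊆ G`. -/
def IsLargeAdd {G : Type} [AddCommGroup G] (A : Set G) : Prop :=
  ∃ F : Finset G, (↑F : Set G) + A = Set.univ

/-- A subset `A` is small if `L \ A` is large for every large `L ⊆ G`. -/
def IsSmallAdd {G : Type} [AddCommGroup G] (A : Set G) : Prop :=
  ∀ L : Set G, IsLargeAdd L → IsLargeAdd (L \ A)

section LargeSmall

variable {G : Type} [AddCommGroup G]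

lemma isLargeAdd_univ : IsLargeAdd (Set.univ : Set G) :=
  ⟨{0}, by simp⟩

lemma not_isSmallAdd_univ : ¬ IsSmallAdd (Set.univ : Set G) := fun h => by
  obtain ⟨F, hF⟩ := h Set.univ isLargeAdd_univ
  simp only [Set.sdiff_self, Set.add_empty] at hF
  exact Set.empty_ne_univ hF

lemma mem_add_diff_of_add_eq_univ {F L H : Set G} (hL : F + L = Set.univ) {x : G}
    (hx : x ∉ F + H) : x ∈ F + (L \ H) := by
  obtain ⟨f, hf, l, hl, rfl⟩ := Set.mem_add.mp (hL ▸ Set.mem_univ x)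
  exact Set.add_mem_add hf ⟨hl, fun hlH => hx (Set.add_mem_add hf hlH)⟩

lemma AddSubgroup.sub_mem_sub_add {F : Set G} {H : AddSubgroup G} {x y : G}
    (hx : x ∈ F + H) (hy : y ∈ F + H) : x - y ∈ F - F + H := by
  obtain ⟨f, hf, k, hk, rfl⟩ := Set.mem_add.mp hx
  obtain ⟨f', hf', k', hk', rfl⟩ := Set.mem_add.mp hy
  exact ⟨f - f', Set.sub_mem_sub hf hf', k - k', H.sub_mem hk hk', sub_add_sub_comm f f' k k'⟩

/-- If `F + L = G` and `t ∉ (F - F) + H`, each `g` lies outside `F + H` or has `g - t` outside it;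
either way `F ∪ (t + F)` translates `L \ H` over `g`. -/
lemma AddSubgroup.isSmallAdd_of_not_isLargeAdd {H : AddSubgroup G}
    (hH : ¬ IsLargeAdd (H : Set G)) : IsSmallAdd (H : Set G) := by
  classical
  rintro L ⟨F, hF⟩
  obtain ⟨t, ht⟩ : ∃ t, t ∉ (↑(F - F) : Set G) + H := by
    by_contra! h
    exact hH ⟨F - F, Set.eq_univ_of_forall h⟩
  refine ⟨F ∪ F.image (t + ·), Set.eq_univ_of_forall fun g => ?_⟩
  by_cases hg : g ∈ (F : Set G) + H
  · have hgt : g - t ∉ (F : Set G) + H := fun hgt => ht <| by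
      simpa [Finset.coe_sub] using AddSubgroup.sub_mem_sub_add hg hgt
    obtain ⟨f, hf, l, hl, hfl⟩ := Set.mem_add.mp (mem_add_diff_of_add_eq_univ hF hgt)
    exact ⟨t + f, by simp [hf], l, hl, by simp only [add_assoc, hfl, add_sub_cancel]⟩
  · refine Set.add_subset_add_right ?_ (mem_add_diff_of_add_eq_univ hF hg)
    simp

lemma AddSubgroup.not_isLargeAdd_of_le_ker {M : Type*} [AddGroup M] [Infinite M]
    {H : AddSubgroup G} (π : G →+ M) (hπ : Function.Surjective π) (hH : H ≤ π.ker) :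
    ¬ IsLargeAdd (H : Set G) := by
  rintro ⟨F, hF⟩
  refine Set.infinite_univ (α := M) ((F.finite_toSet.image π).subset fun m _ => ?_)
  obtain ⟨g, rfl⟩ := hπ m
  obtain ⟨f, hf, k, hk, rfl⟩ := Set.mem_add.mp (hF ▸ Set.mem_univ g)
  exact ⟨f, hf, by simp [AddMonoidHom.mem_ker.mp (hH hk)]⟩

end LargeSmall

lemma exists_injective_isSmallAdd_image_not_isSmallAdd {G : Type} [AddCommGroup G] [Infinite G]
    (E : G ≃+ G × G) :
    ∃ h : G →+ G, Function.Injective h ∧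
      ∃ A : Set G, IsSmallAdd (⇑h '' A) ∧ ¬ IsSmallAdd A := by
  let h : G →+ G := E.symm.toAddMonoidHom.comp (AddMonoidHom.inl G G)
  have hker : h.range ≤ ((AddMonoidHom.snd G G).comp E.toAddMonoidHom).ker := by
    rintro _ ⟨x, rfl⟩
    exact AddMonoidHom.mem_ker.mpr (by simp [h])
  refine ⟨h, E.symm.injective.comp (Prod.mk_left_injective 0), Set.univ, ?_, not_isSmallAdd_univ⟩
  rw [Set.image_univ, ← AddMonoidHom.coe_range]
  refine AddSubgroup.isSmallAdd_of_not_isLargeAdd (AddSubgroup.not_isLargeAdd_of_le_ker _ ?_ hker)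
  exact Prod.snd_surjective.comp E.surjective

namespace Module.Free

variable {R M : Type*} [Semiring R] [AddCommMonoid M] [Module R M] [Module.Free R M]

lemma infinite_chooseBasisIndex_of_not_finite (hfg : ¬ Module.Finite R M) :
    Infinite (ChooseBasisIndex R M) :=
  not_finite_iff_infinite.mp fun _ => hfg (.of_basis (chooseBasis R M))

lemma infinite_of_not_finite [Nontrivial R] (hfg : ¬ Module.Finite R M) : Infinite M :=
  have := infinite_chooseBasisIndex_of_not_finite hfg
  .of_injective _ (chooseBasis R M).injective

lemma nonempty_linearEquiv_prod_self_of_not_finite (hfg : ¬ Module.Finite R M) :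
    Nonempty (M ≃ₗ[R] M × M) := by
  have := infinite_chooseBasisIndex_of_not_finite hfg
  let b := chooseBasis R M
  obtain ⟨e⟩ : Nonempty (ChooseBasisIndex R M ⊕ ChooseBasisIndex R M ≃ ChooseBasisIndex R M) := by
    rw [← Cardinal.eq, Cardinal.mk_sum, Cardinal.lift_id,
      Cardinal.add_eq_self (Cardinal.aleph0_le_mk _)]
  exact ⟨b.equiv (b.prod b) e.symm⟩

end Module.Free

/-- For an infinitely generated free abelian group `G`, the ideal of small subsets is not
auto-invariant: some injective endomorphism `h` and some `A ⊆ G` have `h(A)` small but `A`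
not small. -/
theorem stmt_15 {G : Type} [AddCommGroup G] [Module.Free ℤ G]
    (hfg : ¬ Module.Finite ℤ G) :
    ∃ h : G →+ G, Function.Injective h ∧
      ∃ A : Set G, IsSmallAdd (⇑h '' A) ∧ ¬ IsSmallAdd A := by
  have := Module.Free.infinite_of_not_finite hfg
  obtain ⟨E⟩ := Module.Free.nonempty_linearEquiv_prod_self_of_not_finite hfg
  exact exists_injective_isSmallAdd_image_not_isSmallAdd E.toAddEquiv
end

section
/- Let G be a finitely generated infinite abelian group. Then the ideal of small subsets of G is strongly invariant: for any isomorphism h : H → K between subgroups of G and any A ⊆ H, A is small in G if and only if h(A) is small in G. -/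
open Pointwise

/-- The image `h(A) ⊆ G` of a set `A ⊆ H` under an isomorphism `h : H → K`
between subgroups of `G`. -/
def hImg {G : Type} [Group G] {H K : Subgroup G} (e : H ≃* K) (A : Set G) : Set G :=
  Subtype.val '' (⇑e '' (Subtype.val ⁻¹' A))

section BasicGroup
variable {G : Type} [Group G]

lemma isLarge_mono_s16 {A B : Set G} (h : A ⊆ B) (hA : IsLarge A) : IsLarge B := by
  obtain ⟨F, hF⟩ := hA
  exact ⟨F, Set.eq_univ_of_univ_subset (hF ▸ Set.mul_subset_mul_left h)⟩

lemma isLarge_iff' {A : Set G} :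
    IsLarge A ↔ ∃ F : Finset G, ∀ g : G, ∃ f ∈ F, f⁻¹ * g ∈ A := by
  constructor
  · rintro ⟨F, hF⟩
    refine ⟨F, fun g => ?_⟩
    have : g ∈ (↑F : Set G) * A := hF ▸ Set.mem_univ g
    obtain ⟨f, hf, a, ha, rfl⟩ := this
    exact ⟨f, hf, by simpa using ha⟩
  · rintro ⟨F, hF⟩
    refine ⟨F, Set.eq_univ_of_forall fun g => ?_⟩
    obtain ⟨f, hf, hfa⟩ := hF g
    exact ⟨f, hf, f⁻¹ * g, hfa, by group⟩

end BasicGroup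

section Basic
variable {G : Type} [CommGroup G]

lemma isLarge_iff {A : Set G} :
    IsLarge A ↔ ∃ F : Finset G, ∀ g : G, ∃ f ∈ F, f⁻¹ * g ∈ A := isLarge_iff'

lemma isSmall_mono {A B : Set G} (h : A ⊆ B) (hB : IsSmall B) : IsSmall A := by
  intro L hL
  exact isLarge_mono_s16 (Set.diff_subset_diff_right h) (hB L hL)

lemma IsSmall.union {A B : Set G} (hA : IsSmall A) (hB : IsSmall B) : IsSmall (A ∪ B) := by
  intro L hL
  have : L \ (A ∪ B) = (L \ A) \ B := by
    ext x; simp [and_assoc, and_comm, not_or]; tauto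
  rw [this]
  exact hB _ (hA _ hL)

lemma isSmall_empty : IsSmall (∅ : Set G) := by
  intro L hL; simpa using hL

lemma IsLarge.smul {A : Set G} (h : IsLarge A) (g : G) : IsLarge (g • A) := by
  obtain ⟨F, hF⟩ := isLarge_iff.1 h
  rw [isLarge_iff]
  refine ⟨F, fun x => ?_⟩
  obtain ⟨f, hf, hfx⟩ := hF (g⁻¹ * x)
  refine ⟨f, hf, ?_⟩
  rw [Set.mem_smul_set_iff_inv_smul_mem]
  simp only [smul_eq_mul]
  rw [mul_left_comm]
  exact hfx

lemma isLarge_smul_iff {A : Set G} (g : G) : IsLarge (g • A) ↔ IsLarge A := by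
  constructor
  · intro h
    have := h.smul g⁻¹
    rwa [inv_smul_smul] at this
  · exact fun h => h.smul g

lemma IsSmall.smul {A : Set G} (hA : IsSmall A) (g : G) : IsSmall (g • A) := by
  intro L hL
  have hd : L \ g • A = g • ((g⁻¹ • L) \ A) := by
    rw [Set.smul_set_sdiff, smul_inv_smul]
  rw [hd, isLarge_smul_iff]
  exact hA _ ((isLarge_smul_iff g⁻¹).2 hL)

lemma isSmall_finset_mul {A : Set G} (hA : IsSmall A) (F : Finset G) :
    IsSmall ((↑F : Set G) * A) := by
  classical
  induction F using Finset.induction with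
  | empty => simpa using isSmall_empty
  | @insert f F hf ih =>
    have : ((↑(insert f F) : Set G) * A) = (f • A) ∪ (↑F : Set G) * A := by
      rw [Finset.coe_insert, Set.insert_eq, Set.union_mul, Set.singleton_mul]
      rfl
    rw [this]
    exact (hA.smul f).union ih

lemma isSmall_iff_compl_large {A : Set G} :
    IsSmall A ↔ ∀ F : Finset G, IsLarge ((↑F : Set G) * A)ᶜ := by
  constructor
  · intro hA F
    have h1 : IsLarge (Set.univ : Set G) := ⟨{1}, by simp⟩
    have := isSmall_finset_mul hA F Set.univ h1
    rwa [Set.diff_eq, Set.univ_inter] at this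
  · intro hF L hL
    classical
    obtain ⟨F, hFL⟩ := isLarge_iff.1 hL
    obtain ⟨E, hE⟩ := isLarge_iff.1 (hF F)
    rw [isLarge_iff]
    refine ⟨E * F, fun g => ?_⟩
    obtain ⟨e, he, hce⟩ := hE g
    obtain ⟨f, hf, hfl⟩ := hFL (e⁻¹ * g)
    have key : (e * f)⁻¹ * g = f⁻¹ * (e⁻¹ * g) := by group
    refine ⟨e * f, Finset.mul_mem_mul he hf, ⟨?_, ?_⟩⟩
    · rw [key]; exact hfl
    · rw [key]
      intro hmem
      exact hce ⟨f, by exact_mod_cast hf, f⁻¹ * (e⁻¹ * g), hmem, by group⟩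


end Basic

section Iso
variable {G₁ G₂ : Type} [Group G₁] [Group G₂]

lemma IsLarge.image (φ : G₁ ≃* G₂) {A : Set G₁} (h : IsLarge A) : IsLarge (⇑φ '' A) := by
  classical
  obtain ⟨F, hF⟩ := isLarge_iff'.1 h
  rw [isLarge_iff']
  refine ⟨F.image φ, fun y => ?_⟩
  obtain ⟨f, hf, hfa⟩ := hF (φ.symm y)
  refine ⟨φ f, Finset.mem_image_of_mem _ hf, ⟨f⁻¹ * φ.symm y, hfa, ?_⟩⟩
  rw [map_mul, map_inv, MulEquiv.apply_symm_apply]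

lemma IsSmall.image (φ : G₁ ≃* G₂) {A : Set G₁} (h : IsSmall A) : IsSmall (⇑φ '' A) := by
  intro L hL
  have h1 : IsLarge (⇑φ.symm '' L) := hL.image φ.symm
  have h2 := h _ h1
  have h3 := h2.image φ
  rwa [Set.image_diff (EquivLike.injective φ), Set.image_image,
    (by simp : (fun x => φ (φ.symm x)) '' L = L)] at h3

lemma isSmall_image_iff (φ : G₁ ≃* G₂) {A : Set G₁} : IsSmall (⇑φ '' A) ↔ IsSmall A := by
  refine ⟨fun h => ?_, fun h => h.image φ⟩
  have := h.image φ.symm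
  rwa [Set.image_image, (by simp : (fun x => φ.symm (φ x)) '' A = A)] at this

end Iso

section SubgroupTransfer
variable {G : Type} [CommGroup G] {H : Subgroup G}

lemma large_up (hH : IsLarge (H : Set G)) {L' : Set ↥H} (h : IsLarge L') :
    IsLarge (Subtype.val '' L') := by
  classical
  obtain ⟨T, hT⟩ := isLarge_iff.1 hH
  obtain ⟨E, hE⟩ := isLarge_iff'.1 h
  rw [isLarge_iff]
  refine ⟨T * E.image Subtype.val, fun g => ?_⟩
  obtain ⟨t, ht, hth⟩ := hT g
  obtain ⟨e, he, hel⟩ := hE ⟨t⁻¹ * g, hth⟩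
  refine ⟨t * ↑e, Finset.mul_mem_mul ht (Finset.mem_image_of_mem _ he), ?_⟩
  refine ⟨e⁻¹ * ⟨t⁻¹ * g, hth⟩, hel, ?_⟩
  push_cast
  group

lemma large_down {L : Set G} (hL : IsLarge L) (hsub : L ⊆ (H : Set G)) :
    IsLarge (Subtype.val ⁻¹' L : Set ↥H) := by
  classical
  obtain ⟨F, hF⟩ := isLarge_iff.1 hL
  rw [isLarge_iff']
  refine ⟨(F.filter (· ∈ H)).attach.image
    (fun f => (⟨f.1, (Finset.mem_filter.1 f.2).2⟩ : ↥H)), fun h => ?_⟩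
  obtain ⟨f, hf, hfl⟩ := hF (h : G)
  have hfH : f ∈ H := by
    have hmem : f⁻¹ * (h : G) ∈ H := hsub hfl
    have := H.mul_mem h.2 (H.inv_mem hmem)
    simpa [mul_inv_rev, inv_inv, mul_inv_cancel_left] using this
  refine ⟨⟨f, hfH⟩, ?_, ?_⟩
  · exact Finset.mem_image_of_mem _ (Finset.mem_attach _ ⟨f, Finset.mem_filter.2 ⟨hf, hfH⟩⟩)
  · simpa [Set.mem_preimage] using hfl

lemma small_down (hH : IsLarge (H : Set G)) {A : Set G} (hA : IsSmall A)
    (_hsub : A ⊆ (H : Set G)) : IsSmall (Subtype.val ⁻¹' A : Set ↥H) := by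
  intro L' hL'
  have h2 := hA _ (large_up hH hL')
  have h3 : (Subtype.val '' L') \ A ⊆ (H : Set G) := by
    rintro x ⟨⟨y, _, rfl⟩, _⟩
    exact y.2
  have h4 := large_down h2 h3
  rwa [Set.preimage_diff, Set.preimage_image_eq _ Subtype.val_injective] at h4

lemma small_up (hH : IsLarge (H : Set G)) {A : Set G} (hsub : A ⊆ (H : Set G))
    (hA' : IsSmall (Subtype.val ⁻¹' A : Set ↥H)) : IsSmall A := by
  classical
  rw [isSmall_iff_compl_large]
  intro F
  obtain ⟨T, hT⟩ := isLarge_iff.1 hH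
  choose t ht hth using fun f : G => hT f
  set D : Finset ↥H := F.attach.image (fun f => (⟨(t f.1)⁻¹ * f.1, hth f.1⟩ : ↥H)) with hD
  set TH : Finset ↥H := (T.filter (· ∈ H)).attach.image
    (fun x => (⟨x.1, (Finset.mem_filter.1 x.2).2⟩ : ↥H)) with hTH
  obtain ⟨E, hE⟩ := isLarge_iff'.1 ((isSmall_iff_compl_large.1 hA') (TH * D))
  rw [isLarge_iff]
  refine ⟨T * E.image Subtype.val, fun g => ?_⟩
  obtain ⟨s, hs, hsh⟩ := hT g
  obtain ⟨e, he, hec⟩ := hE ⟨s⁻¹ * g, hsh⟩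
  refine ⟨s * ↑e, Finset.mul_mem_mul hs (Finset.mem_image_of_mem _ he), ?_⟩
  have hxeq : (s * ↑e)⁻¹ * g = ↑(e⁻¹ * (⟨s⁻¹ * g, hsh⟩ : ↥H)) := by
    push_cast; group
  rw [hxeq]
  intro hmem
  obtain ⟨f, hfF, a, haA, hfa⟩ := hmem
  apply hec
  have hfF' : f ∈ F := hfF
  have haH : a ∈ H := hsub haA
  have htfH : t f ∈ H := by
    have h1 : ((t f)⁻¹ * f) * a ∈ H := H.mul_mem (hth f) haH
    have h2 : (↑(e⁻¹ * (⟨s⁻¹ * g, hsh⟩ : ↥H)) : G) ∈ H := (e⁻¹ * (⟨s⁻¹ * g, hsh⟩ : ↥H)).2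
    have h3 : t f = (↑(e⁻¹ * (⟨s⁻¹ * g, hsh⟩ : ↥H)) : G) * (((t f)⁻¹ * f) * a)⁻¹ := by
      rw [← hfa]; group
    rw [h3]
    exact H.mul_mem h2 (H.inv_mem h1)
  refine ⟨(⟨t f, htfH⟩ : ↥H) * ⟨(t f)⁻¹ * f, hth f⟩, ?_, ⟨a, haH⟩, haA, ?_⟩
  · rw [Finset.coe_mul]
    refine Set.mul_mem_mul ?_ ?_
    · exact Finset.mem_image_of_mem _ (Finset.mem_attach _ ⟨t f, Finset.mem_filter.2 ⟨ht f, htfH⟩⟩)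
    · exact Finset.mem_image_of_mem _ (Finset.mem_attach _ ⟨f, hfF'⟩)
  · apply Subtype.ext
    rw [← hfa]
    push_cast
    group

end SubgroupTransfer

section NotLarge
variable {G : Type} [CommGroup G] {H : Subgroup G}

lemma exists_separated (hH : ¬ IsLarge (H : Set G)) (n : ℕ) :
    ∃ E : Finset G, E.card = n ∧ ∀ e ∈ E, ∀ e' ∈ E, e ≠ e' → e⁻¹ * e' ∉ H := by
  classical
  induction n with
  | zero => exact ⟨∅, rfl, by simp⟩
  | succ n ih =>
    obtain ⟨E, hcard, hsep⟩ := ih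
    have hne : (↑E : Set G) * (H : Set G) ≠ Set.univ := fun h => hH ⟨E, h⟩
    obtain ⟨x, hx⟩ := Set.ne_univ_iff_exists_notMem _ |>.1 hne
    have hxE : x ∉ E := by
      intro hmem
      exact hx ⟨x, hmem, 1, H.one_mem, mul_one x⟩
    have hxH : ∀ e ∈ E, e⁻¹ * x ∉ H := by
      intro e heE hmem
      exact hx ⟨e, heE, e⁻¹ * x, hmem, by group⟩
    refine ⟨insert x E, by rw [Finset.card_insert_of_notMem hxE, hcard], ?_⟩
    intro e he e' he' hne'
    rcases Finset.mem_insert.1 he with rfl | heE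
    · rcases Finset.mem_insert.1 he' with rfl | he'E
      · exact absurd rfl hne'
      · intro hmem
        exact hxH e' he'E (by simpa [mul_inv_rev] using H.inv_mem hmem)
    · rcases Finset.mem_insert.1 he' with rfl | he'E
      · exact hxH e heE
      · exact hsep e heE e' he'E hne'

lemma cancel_aux {a b c d g : G} (h : a⁻¹ * g * c⁻¹ = b⁻¹ * g * d⁻¹) :
    a⁻¹ * b = c * d⁻¹ := by
  have h2 : a⁻¹ = b⁻¹ * d⁻¹ * c := by
    calc a⁻¹ = a⁻¹ * g * c⁻¹ * (c * g⁻¹) := by group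
    _ = b⁻¹ * g * d⁻¹ * (c * g⁻¹) := by rw [h]
    _ = b⁻¹ * d⁻¹ * c := by
        have h3 : b⁻¹ * g * d⁻¹ * (c * g⁻¹) = b⁻¹ * d⁻¹ * c * (g * g⁻¹) := by ac_rfl
        rw [h3, mul_inv_cancel, mul_one]
  rw [h2]
  have h4 : b⁻¹ * d⁻¹ * c * b = c * d⁻¹ * (b⁻¹ * b) := by ac_rfl
  rw [h4, inv_mul_cancel, mul_one]

lemma isSmall_of_not_large (hH : ¬ IsLarge (H : Set G)) {A : Set G}
    (hsub : A ⊆ (H : Set G)) : IsSmall A := by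
  classical
  rw [isSmall_iff_compl_large]
  intro F
  have hmono : ((↑F : Set G) * (H : Set G))ᶜ ⊆ ((↑F : Set G) * A)ᶜ :=
    Set.compl_subset_compl.2 (Set.mul_subset_mul_left hsub)
  refine isLarge_mono_s16 hmono ?_
  obtain ⟨E, hcard, hsep⟩ := exists_separated hH (F.card + 1)
  rw [isLarge_iff]
  refine ⟨E, fun g => ?_⟩
  by_contra hcon
  push_neg at hcon
  have hall : ∀ e ∈ E, e⁻¹ * g ∈ (↑F : Set G) * (H : Set G) := by
    intro e he
    have := hcon e he
    simpa using this
  -- pigeonhole: map each e to the f ∈ F it uses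
  have hmap : ∀ e : {x // x ∈ E}, ∃ f ∈ F, ∃ h ∈ H, f * h = (e : G)⁻¹ * g := by
    intro e
    obtain ⟨f, hf, h, hh, hfh⟩ := hall e e.2
    exact ⟨f, hf, h, hh, hfh⟩
  choose fc hfc hc hhc hfhc using hmap
  have hlt : F.card < E.attach.card := by
    rw [Finset.card_attach, hcard]; omega
  obtain ⟨x, _, y, _, hxy, hfxy⟩ :=
    Finset.exists_ne_map_eq_of_card_lt_of_maps_to hlt (fun e _ => hfc e)
  apply hsep x x.2 y y.2 (fun h => hxy (Subtype.ext h))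
  have hx' := hfhc x
  have hy' := hfhc y
  have a1 : fc x = (x : G)⁻¹ * g * (hc x)⁻¹ := by rw [← hx']; group
  have a2 : fc y = (y : G)⁻¹ * g * (hc y)⁻¹ := by rw [← hy']; group
  have e3 : (x : G)⁻¹ * g * (hc x)⁻¹ = (y : G)⁻¹ * g * (hc y)⁻¹ := by
    rw [← a1, ← a2, hfxy]
  rw [cancel_aux e3]
  exact H.mul_mem (hhc x) (H.inv_mem (hhc y))

end NotLarge

section RankArg
variable {G : Type} [CommGroup G]

-- large subgroup gives torsion quotient (elementwise)
lemma exists_zpow_mem_of_large {H : Subgroup G} (hH : IsLarge (H : Set G)) (g : G) :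
    ∃ n : ℤ, n ≠ 0 ∧ g ^ n ∈ H := by
  obtain ⟨T, hT⟩ := isLarge_iff.1 hH
  choose t ht hth using fun n : ℕ => hT (g ^ n)
  have hfin : ∃ m n : ℕ, m ≠ n ∧ t m = t n := by
    obtain ⟨m, n, hmn, heq⟩ := Finite.exists_ne_map_eq_of_infinite
      (fun k : ℕ => (⟨t k, ht k⟩ : {x // x ∈ T}))
    exact ⟨m, n, hmn, congrArg Subtype.val heq⟩
  obtain ⟨m, n, hmn, heq⟩ := hfin
  have hne : ((n : ℤ) - m) ≠ 0 := by
    intro h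
    exact hmn (Nat.cast_inj.1 (sub_eq_zero.1 h)).symm
  refine ⟨(n : ℤ) - m, hne, ?_⟩
  have h1 : (t m)⁻¹ * g ^ m ∈ H := hth m
  have h2 : (t m)⁻¹ * g ^ n ∈ H := heq ▸ hth n
  have h3 : ((t m)⁻¹ * g ^ m)⁻¹ * ((t m)⁻¹ * g ^ n) = g ^ ((n : ℤ) - m) := by
    rw [mul_inv_rev, inv_inv, mul_assoc, mul_inv_cancel_left, zpow_sub,
      zpow_natCast, zpow_natCast]
    exact mul_comm _ _
  exact h3 ▸ H.mul_mem (H.inv_mem h1) h2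

-- torsion quotient (elementwise) gives large subgroup
lemma large_of_forall_zpow_mem [Group.FG G] {H : Subgroup G}
    (hH : ∀ g : G, ∃ n : ℤ, n ≠ 0 ∧ g ^ n ∈ H) : IsLarge (H : Set G) := by
  have htor : Monoid.IsTorsion (G ⧸ H) := by
    intro x
    obtain ⟨g, rfl⟩ := QuotientGroup.mk_surjective x
    obtain ⟨n, hn, hgn⟩ := hH g
    rw [isOfFinOrder_iff_pow_eq_one]
    refine ⟨n.natAbs, Int.natAbs_pos.2 hn, ?_⟩
    have hmem : g ^ (n.natAbs : ℤ) ∈ H := by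
      rcases Int.natAbs_eq n with h | h
      · rwa [← h]
      · rw [← neg_neg ((n.natAbs : ℤ)), ← h, zpow_neg]
        exact H.inv_mem hgn
    rw [← zpow_natCast, ← QuotientGroup.mk_zpow, QuotientGroup.eq_one_iff]
    exact hmem
  have hfin : Finite (G ⧸ H) := CommGroup.finite_of_fg_torsion (G ⧸ H) htor
  rw [isLarge_iff]
  let f : G ⧸ H → G := Quotient.out
  refine ⟨(Set.finite_range f).toFinset, fun g => ?_⟩
  refine ⟨f (QuotientGroup.mk g), (Set.Finite.mem_toFinset _).2 (Set.mem_range_self _), ?_⟩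
  rw [SetLike.mem_coe, ← QuotientGroup.eq]
  exact Quotient.out_eq _

end RankArg

section Torsion

lemma torsion_transfer {M : Type} [AddCommGroup M] [AddGroup.FG M]
    {N P : AddSubgroup M} (e : N ≃+ P)
    (hP : ∀ x : M, ∃ n : ℤ, n ≠ 0 ∧ n • x ∈ P) :
    ∀ x : M, ∃ n : ℤ, n ≠ 0 ∧ n • x ∈ N := by
  haveI : Module.Finite ℤ M := Module.Finite.iff_addGroup_fg.mpr ‹_›
  set N' := AddSubgroup.toIntSubmodule N with hN'
  set P' := AddSubgroup.toIntSubmodule P with hP'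
  have rankNP : Module.rank ℤ N' = Module.rank ℤ P' := by
    refine LinearEquiv.rank_eq ?_
    exact AddEquiv.toIntLinearEquiv e
  have h1 : Module.rank ℤ (M ⧸ P') = 0 := by
    rw [rank_eq_zero_iff]
    intro x
    obtain ⟨y, rfl⟩ := Submodule.Quotient.mk_surjective P' x
    obtain ⟨n, hn, hnP⟩ := hP y
    refine ⟨n, hn, ?_⟩
    rw [← Submodule.Quotient.mk_smul, Submodule.Quotient.mk_eq_zero]
    exact hnP
  have h2 := Submodule.rank_quotient_add_rank P'
  have h3 := Submodule.rank_quotient_add_rank N'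
  rw [h1, zero_add] at h2
  rw [← h2, ← rankNP] at h3
  have hfin : Module.rank ℤ ↥N' < Cardinal.aleph0 :=
    lt_of_le_of_lt (Submodule.rank_le N') (Module.rank_lt_aleph0 ℤ M)
  have h4 : Module.rank ℤ (M ⧸ N') = 0 := by
    have hle : Module.rank ℤ (M ⧸ N') ≤ Module.rank ℤ ↥N' := by
      rw [← h3]; exact self_le_add_right _ _
    have hq : Module.rank ℤ (M ⧸ N') < Cardinal.aleph0 := lt_of_le_of_lt hle hfin
    have := congrArg Cardinal.toNat h3
    rw [Cardinal.toNat_add hq hfin] at this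
    have hzero : Cardinal.toNat (Module.rank ℤ (M ⧸ N')) = 0 := by omega
    rcases Cardinal.toNat_eq_zero.1 hzero with h | h
    · exact h
    · exact absurd h (not_le.2 hq)
  intro x
  obtain ⟨n, hn, hq⟩ := rank_eq_zero_iff.1 h4 (Submodule.Quotient.mk x)
  refine ⟨n, hn, ?_⟩
  rw [← Submodule.Quotient.mk_smul, Submodule.Quotient.mk_eq_zero] at hq
  exact hq

end Torsion

section Glue
variable {G : Type} [CommGroup G]

def subAddEquiv (L : Subgroup G) : ↥(Subgroup.toAddSubgroup L) ≃+ Additive ↥L where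
  toFun := fun x => Additive.ofMul (⟨x.1.toMul, x.2⟩ : ↥L)
  invFun := fun y => ⟨Additive.ofMul (↑y.toMul : G), y.toMul.2⟩
  left_inv := fun _ => rfl
  right_inv := fun _ => rfl
  map_add' := fun _ _ => rfl

lemma large_of_mulEquiv_large [Group.FG G] {H K : Subgroup G} (e : ↥H ≃* ↥K)
    (hK : IsLarge (K : Set G)) : IsLarge (H : Set G) := by
  haveI : AddGroup.FG (Additive G) := GroupFG.iff_add_fg.1 ‹_›
  set N := Subgroup.toAddSubgroup H
  set P := Subgroup.toAddSubgroup K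
  let eAdd : ↥N ≃+ ↥P :=
    (subAddEquiv H).trans ((MulEquiv.toAdditive e).trans (subAddEquiv K).symm)
  have hP : ∀ x : Additive G, ∃ n : ℤ, n ≠ 0 ∧ n • x ∈ P := by
    intro x
    obtain ⟨n, hn, hmem⟩ := exists_zpow_mem_of_large hK x.toMul
    refine ⟨n, hn, ?_⟩
    show (n • x).toMul ∈ K
    rw [toMul_zsmul]
    exact hmem
  have hN := torsion_transfer eAdd hP
  apply large_of_forall_zpow_mem
  intro g
  obtain ⟨n, hn, hmem⟩ := hN (Additive.ofMul g)
  refine ⟨n, hn, ?_⟩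
  have : (n • Additive.ofMul g).toMul ∈ H := hmem
  rwa [toMul_zsmul] at this

end Glue

section Main
variable {G : Type} [CommGroup G]

lemma hImg_subset {H K : Subgroup G} (e : ↥H ≃* ↥K) (A : Set G) :
    hImg e A ⊆ (K : Set G) := by
  rintro x ⟨y, _, rfl⟩
  exact y.2

lemma hImg_symm_hImg {H K : Subgroup G} (e : ↥H ≃* ↥K) {A : Set G}
    (hA : A ⊆ (H : Set G)) : hImg e.symm (hImg e A) = A := by
  unfold hImg
  rw [Set.preimage_image_eq _ Subtype.val_injective]
  have h1 : (⇑e.symm '' (⇑e '' (Subtype.val ⁻¹' A))) = Subtype.val ⁻¹' A := by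
    rw [Set.image_image]; simp
  rw [h1, Set.image_preimage_eq_of_subset (by rwa [Subtype.range_coe])]

lemma isSmall_hImg [Group.FG G] {H K : Subgroup G} (e : ↥H ≃* ↥K) (A : Set G)
    (hA : A ⊆ (H : Set G)) (h : IsSmall A) : IsSmall (hImg e A) := by
  by_cases hK : IsLarge (K : Set G)
  · have hH : IsLarge (H : Set G) := large_of_mulEquiv_large e hK
    have h1 : IsSmall (Subtype.val ⁻¹' A : Set ↥H) := small_down hH h hA
    have h2 : IsSmall (⇑e '' (Subtype.val ⁻¹' A)) := h1.image e
    refine small_up hK (hImg_subset e A) ?_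
    rw [hImg, Set.preimage_image_eq _ Subtype.val_injective]
    exact h2
  · exact isSmall_of_not_large hK (hImg_subset e A)

end Main


/-- For a finitely generated infinite abelian group, the ideal of small sets is strongly
invariant. -/
theorem stmt_16 {G : Type} [CommGroup G] [Group.FG G] [Infinite G]
    {H K : Subgroup G} (e : H ≃* K) (A : Set G) (hA : A ⊆ (H : Set G)) :
    IsSmall A ↔ IsSmall (hImg e A) := by
  constructor
  · exact isSmall_hImg e A hA
  · intro h
    have h2 := isSmall_hImg e.symm (hImg e A) (hImg_subset e A) h
    rwa [hImg_symm_hImg e hA] at h2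
end

section
/- Let G be an infinite Boolean group (every element has order ≤ 2) and let F_G be the ideal of finite subsets of G. Then the family τ(F_G) of thin subsets of G is not additive: there exist thin sets A, B ⊆ G whose union is not thin. -/
open Pointwise

/-- A subset `A` of a group `G` is thin if `xA ∩ yA` is finite for all distinct `x, y`. -/
def IsThin {G : Type} [Group G] (A : Set G) : Prop :=
  ∀ x y : G, x ≠ y → (x • A ∩ y • A).Finite

section Aux

attribute [local instance] Classical.propDecidable

variable {G : Type} [Group G] [Infinite G]

noncomputable def chooseNot (s : Finset G) : G := (Infinite.exists_notMem_finset s).choose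

omit [Group G] in
lemma chooseNot_spec (s : Finset G) : chooseNot s ∉ s :=
  (Infinite.exists_notMem_finset s).choose_spec

noncomputable def gfun : ∀ n : ℕ, Fin n → G
  | 0 => Fin.elim0
  | n+1 => Fin.snoc (gfun n)
      (chooseNot ((Finset.univ : Finset (Fin n × Fin n × Fin n)).image
        (fun p => gfun n p.1 * gfun n p.2.1 * gfun n p.2.2)))

noncomputable def fseq (n : ℕ) : G := gfun (n+1) (Fin.last n)

lemma gfun_eq : ∀ (n : ℕ) (i : Fin n), gfun (G := G) n i = fseq i := by
  intro n
  induction n with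
  | zero => exact fun i => i.elim0
  | succ n ih =>
    intro i
    refine Fin.lastCases ?_ ?_ i
    · rfl
    · intro j
      have h1 : gfun (G := G) (n+1) (Fin.castSucc j) = gfun n j := by
        rw [gfun]; exact Fin.snoc_castSucc _ _ _
      rw [h1, ih j]
      simp

lemma fseq_prop {n i j k : ℕ} (hi : i < n) (hj : j < n) (hk : k < n) :
    fseq (G := G) n ≠ fseq i * fseq j * fseq k := by
  intro h
  apply chooseNot_spec ((Finset.univ : Finset (Fin n × Fin n × Fin n)).image
        (fun p => gfun (G := G) n p.1 * gfun n p.2.1 * gfun n p.2.2))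
  have hval : fseq (G := G) n = chooseNot ((Finset.univ : Finset (Fin n × Fin n × Fin n)).image
        (fun p => gfun (G := G) n p.1 * gfun n p.2.1 * gfun n p.2.2)) := by
    rw [fseq, gfun]; exact Fin.snoc_last _ _
  rw [← hval, h, Finset.mem_image]
  exact ⟨(⟨i, hi⟩, ⟨j, hj⟩, ⟨k, hk⟩), Finset.mem_univ _, by
    rw [gfun_eq, gfun_eq, gfun_eq]⟩

end Aux

section Bool

variable {G : Type} [Group G] [Infinite G] (hb : ∀ g : G, g * g = 1)

include hb

lemma binv (g : G) : g⁻¹ = g := inv_eq_of_mul_eq_one_right (hb g)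

lemma bcomm (a b : G) : a * b = b * a := by
  have : a * b = (a * b)⁻¹ := (binv hb _).symm
  rw [this, mul_inv_rev, binv hb, binv hb]

lemma fseq_inj : Function.Injective (fseq (G := G)) := by
  have key : ∀ m n : ℕ, m < n → fseq (G := G) m ≠ fseq n := by
    intro m n hlt h
    refine fseq_prop hlt hlt hlt (h.symm.trans ?_)
    rw [hb, one_mul]
  intro m n h
  by_contra hne
  rcases lt_or_gt_of_ne hne with hlt | hlt
  · exact key m n hlt h
  · exact key n m hlt h.symm

/-- If `a` is the max index, solutions to `f a * f b = f a' * f b'` are unique. -/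
lemma aux_max {a b a' b' : ℕ}
    (h : fseq (G := G) a * fseq b = fseq a' * fseq b')
    (hab : a ≠ b) (h1 : b ≤ a) (h2 : a' ≤ a) (h3 : b' ≤ a) :
    (a = a' ∧ b = b') ∨ (a = b' ∧ b = a') := by
  by_cases haa' : a = a'
  · subst haa'
    exact Or.inl ⟨rfl, fseq_inj hb (mul_left_cancel h)⟩
  by_cases hab' : a = b'
  · subst hab'
    right
    refine ⟨rfl, ?_⟩
    rw [bcomm hb (fseq a') (fseq a)] at h
    exact fseq_inj hb (mul_left_cancel h)
  exfalso
  have key : fseq (G := G) a = fseq a' * fseq b' * fseq b := by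
    have := eq_mul_inv_of_mul_eq h
    rwa [binv hb] at this
  exact fseq_prop (lt_of_le_of_ne h2 (Ne.symm haa'))
    (lt_of_le_of_ne h3 (Ne.symm hab')) (lt_of_le_of_ne h1 (Ne.symm hab)) key

lemma solve_unique {a b a' b' : ℕ}
    (h : fseq (G := G) a * fseq b = fseq a' * fseq b')
    (hab : a ≠ b) (hab' : a' ≠ b') :
    (a = a' ∧ b = b') ∨ (a = b' ∧ b = a') := by
  rcases le_total b a with h1 | h1
  · rcases le_total b' a' with h2 | h2
    · rcases le_total a' a with h3 | h3
      · exact aux_max hb h hab h1 h3 (h2.trans h3)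
      · rcases aux_max hb h.symm hab' h2 h3 (h1.trans h3) with ⟨e1, e2⟩ | ⟨e1, e2⟩
        · omega
        · omega
    · rcases le_total b' a with h3 | h3
      · have h' : fseq (G := G) a * fseq b = fseq b' * fseq a' := by
          rw [h, bcomm hb]
        rcases aux_max hb h' hab h1 h3 (h2.trans h3) with ⟨e1, e2⟩ | ⟨e1, e2⟩
        · omega
        · omega
      · have h' : fseq (G := G) b' * fseq a' = fseq a * fseq b := by
          rw [bcomm hb (fseq b') (fseq a')]; exact h.symm
        rcases aux_max hb h' (Ne.symm hab') h2 h3 (h1.trans h3) with ⟨e1, e2⟩ | ⟨e1, e2⟩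
        · omega
        · omega
  · have h0 : fseq (G := G) b * fseq a = fseq a' * fseq b' := by
      rw [bcomm hb (fseq b) (fseq a)]; exact h
    rcases le_total b' a' with h2 | h2
    · rcases le_total a' b with h3 | h3
      · rcases aux_max hb h0 (Ne.symm hab) h1 h3 (h2.trans h3) with ⟨e1, e2⟩ | ⟨e1, e2⟩
        · omega
        · omega
      · rcases aux_max hb h0.symm hab' h2 h3 (h1.trans h3) with ⟨e1, e2⟩ | ⟨e1, e2⟩
        · omega
        · omega
    · rcases le_total b' b with h3 | h3
      · have h' : fseq (G := G) b * fseq a = fseq b' * fseq a' := by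
          rw [h0, bcomm hb]
        rcases aux_max hb h' (Ne.symm hab) h1 h3 (h2.trans h3) with ⟨e1, e2⟩ | ⟨e1, e2⟩
        · omega
        · omega
      · have h' : fseq (G := G) b' * fseq a' = fseq b * fseq a := by
          rw [bcomm hb (fseq b') (fseq a')]; exact h0.symm
        rcases aux_max hb h' (Ne.symm hab') h2 h3 (h1.trans h3) with ⟨e1, e2⟩ | ⟨e1, e2⟩
        · omega
        · omega

lemma range_thin : IsThin (Set.range (fseq (G := G))) := by
  intro x y hxy
  set c : G := x⁻¹ * y with hc
  have hc1 : c ≠ 1 := by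
    intro h
    exact hxy (inv_mul_eq_one.mp h)
  have hmem : ∀ g ∈ x • Set.range (fseq (G := G)) ∩ y • Set.range fseq,
      ∃ a b : ℕ, g = x * fseq a ∧ fseq (G := G) a * fseq b = c := by
    rintro g ⟨⟨_, ⟨a, rfl⟩, rfl⟩, ⟨_, ⟨b, rfl⟩, hg⟩⟩
    refine ⟨a, b, rfl, ?_⟩
    have hthis : x * fseq a = y * fseq b := hg.symm
    have h2 : fseq (G := G) a * (fseq b)⁻¹ = x⁻¹ * y := by
      have := congrArg (fun g => x⁻¹ * g * (fseq b)⁻¹) hthis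
      simpa [mul_assoc] using this
    rwa [binv hb] at h2
  by_cases hex : ∃ a b : ℕ, fseq (G := G) a * fseq b = c
  · obtain ⟨a0, b0, hab0⟩ := hex
    apply Set.Finite.subset ((Set.finite_singleton (x * fseq b0)).insert (x * fseq a0))
    intro g hg
    obtain ⟨a, b, rfl, hab⟩ := hmem g hg
    have hne : a ≠ b := by
      intro h; subst h
      rw [hb] at hab
      exact hc1 hab.symm
    have hne0 : a0 ≠ b0 := by
      intro h; subst h
      rw [hb] at hab0
      exact hc1 hab0.symm
    rcases solve_unique hb (hab.trans hab0.symm) hne hne0 with ⟨e1, -⟩ | ⟨e1, -⟩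
    · simp [e1]
    · simp [e1]
  · apply Set.Finite.subset Set.finite_empty
    intro g hg
    obtain ⟨a, b, -, hab⟩ := hmem g hg
    exact absurd ⟨a, b, hab⟩ hex

end Bool

/-- In an infinite Boolean group the family of thin sets is not additive. -/
theorem stmt_17 {G : Type} [Group G] [Infinite G] (hb : ∀ g : G, g * g = 1) :
    ∃ A B : Set G, IsThin A ∧ IsThin B ∧ ¬ IsThin (A ∪ B) := by
  obtain ⟨x₀, hx₀⟩ := exists_ne (1 : G)
  set A : Set G := Set.range (fseq (G := G)) with hA
  refine ⟨A, x₀ • A, range_thin hb, ?_, ?_⟩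
  · intro x y hxy
    have h1 : x • (x₀ • A) = (x * x₀) • A := smul_smul x x₀ A
    have h2 : y • (x₀ • A) = (y * x₀) • A := smul_smul y x₀ A
    rw [h1, h2]
    exact range_thin hb (x * x₀) (y * x₀) (fun h => hxy (mul_right_cancel h))
  · intro hthin
    have hfin := hthin x₀ 1 hx₀
    have heq : x₀ • (A ∪ x₀ • A) = x₀ • A ∪ A := by
      rw [Set.smul_set_union, smul_smul, hb x₀, one_smul]
    rw [heq, one_smul] at hfin
    have hsub : A ⊆ (x₀ • A ∪ A) ∩ (A ∪ x₀ • A) := fun g hg =>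
      ⟨Or.inr hg, Or.inl hg⟩
    exact (Set.infinite_range_of_injective (fseq_inj hb)) (hfin.subset hsub)
end
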